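/- With ι, π as above and ζ : K^{op} ⊗ H → H, k ⊗ h ↦ ε(k)h, γ : K^{op} → K^{op} ⊗ H, k ↦ k ⊗ 1, the identity (ι∘ζ) ∗ (γ∘π) = id holds in the convolution algebra End_k(K^{op} ⊗ H), i.e. Σ ι(ζ(x₁)) · γ(π(x₂)) = x for all x ∈ K^{op} ⊗ H. -/

import Mathlib

/-!
Write `x = κ ⊗ h`. Only `ε(κ₍₁₎) κ₍₂₎ = κ` survives of the `K`-factor, so the left-hand side is
`Σ κ σ_r(h₍₂₎) σ_r(S⁻¹ h₍₁₎₍₂₎) ⊗ h₍₁₎₍₁₎`. The pairing axioms make `σ_r` a unital algebra map, which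
turns this into `Σ κ σ_r(h₍₂₎ S⁻¹ h₍₁₎₍₂₎) ⊗ h₍₁₎₍₁₎`; by coassociativity and
`Σ h₍₂₎ S⁻¹ h₍₁₎ = ε(h) 1` (apply the injective antimultiplicative `S`) it is `κ σ_r(1) ⊗ h = κ ⊗ h`.
-/

open TensorProduct LinearMap Coalgebra Module

noncomputable section

variable (k : Type) [Field k]

/-- Convolution product of two linear functionals on a coalgebra. -/
def fconv (C : Type) [AddCommGroup C] [Module k C] [Coalgebra k C]
    (f g : C →ₗ[k] k) : C →ₗ[k] k :=
  LinearMap.mul' k k ∘ₗ TensorProduct.map f g ∘ₗ Coalgebra.comul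

/-- The comultiplication of the dual coalgebra of a finite-dimensional algebra. -/
def dcomul (K : Type) [Ring K] [Algebra k K] [Module.Finite k K] :
    Module.Dual k K →ₗ[k] Module.Dual k K ⊗[k] Module.Dual k K :=
  (TensorProduct.dualDistribEquiv k K K).symm.toLinearMap ∘ₗ (LinearMap.mul' k K).dualMap

variable (K H : Type) [Ring K] [Ring H] [HopfAlgebra k K] [HopfAlgebra k H]
  [Module.Finite k K] [Module.Finite k H]

/-- The map `σ_r : H → K` induced by a pairing `σ : K* ⊗ H → k` (curried as `σ : K* → H*`),
via the canonical identification `K ≅ K**`. -/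
def sigmaR (σ : Module.Dual k K →ₗ[k] Module.Dual k H) : H →ₗ[k] K :=
  (Module.evalEquiv k K).symm.toLinearMap ∘ₗ σ.flip

/-- The opposite multiplication of `K`, i.e. the multiplication of `K^{op}`
(`k ⊗ k' ↦ k' * k`), on the underlying space `K`. -/
def opMul : K ⊗[k] K →ₗ[k] K :=
  LinearMap.mul' k K ∘ₗ (TensorProduct.comm k K K).toLinearMap

/-- The multiplication of the tensor product algebra `K^{op} ⊗ H`
(on the underlying space `K ⊗ H`). -/
def mulB : (K ⊗[k] H) ⊗[k] (K ⊗[k] H) →ₗ[k] K ⊗[k] H :=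
  TensorProduct.map (opMul k K) (LinearMap.mul' k H)
    ∘ₗ (TensorProduct.tensorTensorTensorComm k K H K H).toLinearMap

/-- The unit of `K^{op} ⊗ H`. -/
def oneB : K ⊗[k] H := (1 : K) ⊗ₜ[k] (1 : H)

/-- The comultiplication of the tensor product coalgebra `K^{op} ⊗ H`
(`K^{op}` has the same comultiplication as `K`). -/
def comulB : K ⊗[k] H →ₗ[k] (K ⊗[k] H) ⊗[k] (K ⊗[k] H) :=
  (TensorProduct.tensorTensorTensorComm k K K H H).toLinearMap
    ∘ₗ TensorProduct.map Coalgebra.comul Coalgebra.comul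

/-- The counit of the coalgebra `K^{op} ⊗ H`. -/
def epsB : K ⊗[k] H →ₗ[k] k :=
  LinearMap.mul' k k ∘ₗ
    TensorProduct.map (Coalgebra.counit (R := k) (A := K)) (Coalgebra.counit (R := k) (A := H))

/-- The coaction `ρ : H → (K^{op} ⊗ H) ⊗ H`, `h ↦ Σ (σ_r(S⁻¹(h₍₃₎)) ⊗ h₍₁₎) ⊗ h₍₂₎`. -/
def rhoH (σ : Module.Dual k K →ₗ[k] Module.Dual k H) (Sinv : H →ₗ[k] H) :
    H →ₗ[k] (K ⊗[k] H) ⊗[k] H :=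
  (TensorProduct.assoc k K H H).symm.toLinearMap
    ∘ₗ TensorProduct.map (sigmaR k K H σ ∘ₗ Sinv) .id
    ∘ₗ (TensorProduct.comm k (H ⊗[k] H) H).toLinearMap
    ∘ₗ TensorProduct.map Coalgebra.comul .id ∘ₗ Coalgebra.comul

/-- The right `K^{op} ⊗ H`-action on `K^{op}`:
`l ⊗ (κ ⊗ h) ↦ κ l σ_r(h)`, where the product is written in `K`
(i.e. the element `κ * l * σ_r(h)` of `K`). -/
def actK (σ : Module.Dual k K →ₗ[k] Module.Dual k H) :
    K ⊗[k] (K ⊗[k] H) →ₗ[k] K :=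
  LinearMap.mul' k K
    ∘ₗ TensorProduct.map (LinearMap.mul' k K ∘ₗ (TensorProduct.comm k K K).toLinearMap) .id
    ∘ₗ (TensorProduct.assoc k K K K).symm.toLinearMap
    ∘ₗ TensorProduct.map .id (TensorProduct.map .id (sigmaR k K H σ))

/-- The map `ι : H → K^{op} ⊗ H`, `h ↦ Σ σ_r(S⁻¹(h₍₂₎)) ⊗ h₍₁₎`. -/
def iotaH (σ : Module.Dual k K →ₗ[k] Module.Dual k H) (Sinv : H →ₗ[k] H) :
    H →ₗ[k] K ⊗[k] H :=
  TensorProduct.map (sigmaR k K H σ ∘ₗ Sinv) .id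
    ∘ₗ (TensorProduct.comm k H H).toLinearMap ∘ₗ Coalgebra.comul

/-- The map `π : K^{op} ⊗ H → K^{op}`, `κ ⊗ h ↦ κ σ_r(h)` (product written in `K`). -/
def piB (σ : Module.Dual k K →ₗ[k] Module.Dual k H) : K ⊗[k] H →ₗ[k] K :=
  LinearMap.mul' k K ∘ₗ TensorProduct.map .id (sigmaR k K H σ)

/-- The map `ζ : K^{op} ⊗ H → H`, `κ ⊗ h ↦ ε(κ) h`. -/
def zetaB : K ⊗[k] H →ₗ[k] H :=
  (TensorProduct.lid k H).toLinearMap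
    ∘ₗ TensorProduct.map (Coalgebra.counit (R := k) (A := K)) .id

/-- The map `γ : K^{op} → K^{op} ⊗ H`, `κ ↦ κ ⊗ 1`. -/
def gammaB : K →ₗ[k] K ⊗[k] H :=
  (TensorProduct.mk k K H).flip (1 : H)


section AntipodeInv

variable {R A : Type*} [CommSemiring R] [Semiring A] [HopfAlgebra R A] {Sinv : A →ₗ[R] A}

open HopfAlgebra

lemma sum_mul_antipodeInv_eq_algebraMap_counit (h₁ : Sinv ∘ₗ antipode R = .id)
    (h₂ : antipode R ∘ₗ Sinv = .id) {a : A} {ι : Type*} (𝓡 : Repr R a ι) :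
    ∑ i ∈ 𝓡.index, 𝓡.right i * Sinv (𝓡.left i) = algebraMap R A (counit a) := by
  have hS : Function.LeftInverse Sinv (antipode R) := LinearMap.congr_fun h₁
  apply hS.injective
  simp only [map_sum, antipode_mul_antidistrib, show ∀ x, antipode R (Sinv x) = x from
    LinearMap.congr_fun h₂, sum_mul_antipode_eq_algebraMap_counit 𝓡,
    Algebra.algebraMap_eq_smul_one, map_smul, antipode_one]

lemma sum_tmul_mul_antipodeInv (h₁ : Sinv ∘ₗ antipode R = .id) (h₂ : antipode R ∘ₗ Sinv = .id)
    (a : A) :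
    ∑ j ∈ (ℛ R a).index, ∑ l ∈ (ℛ R ((ℛ R a).left j)).index,
      (ℛ R ((ℛ R a).left j)).left l ⊗ₜ[R] ((ℛ R a).right j * Sinv ((ℛ R ((ℛ R a).left j)).right l))
      = a ⊗ₜ[R] (1 : A) := by
  have coassoc := sum_tmul_tmul_eq (ℛ R a) (fun j ↦ ℛ R ((ℛ R a).left j))
    (fun j ↦ ℛ R ((ℛ R a).right j))
  apply_fun map .id (mul' R A ∘ₗ (TensorProduct.comm R A A).toLinearMap ∘ₗ map Sinv .id)
    at coassoc
  simp only [map_sum, map_tmul, comp_apply, id_apply, LinearEquiv.coe_coe, comm_tmul,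
    mul'_apply] at coassoc
  calc _ = ∑ j ∈ (ℛ R a).index, (ℛ R a).left j ⊗ₜ[R] algebraMap R A (counit ((ℛ R a).right j)) := by
        simp only [coassoc, ← tmul_sum, sum_mul_antipodeInv_eq_algebraMap_counit h₁ h₂]
    _ = map .id (Algebra.linearMap R A) (a ⊗ₜ[R] (1 : R)) := by
        rw [← sum_tmul_counit_eq (ℛ R a)]
        simp only [map_sum, map_tmul, id_apply, Algebra.linearMap_apply]
    _ = a ⊗ₜ[R] (1 : A) := by simp

end AntipodeInv

section Pairing

variable {k K H}

lemma mul'_map_eval_dcomul (f : Dual k K) (x y : K) :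
    mul' k k (map (Dual.eval k K x) (Dual.eval k K y) (dcomul k K f)) = f (x * y) := by
  have h : ∀ t, mul' k k (map (Dual.eval k K x) (Dual.eval k K y) t) =
      dualDistribEquiv k K K t (x ⊗ₜ y) := by
    intro t
    induction t using TensorProduct.induction_on with
    | zero => simp
    | tmul g g' => simp
    | add t t' ht ht' => simp only [map_add, ht, ht', LinearMap.add_apply]
  rw [dcomul, comp_apply, LinearEquiv.coe_coe, h, LinearEquiv.apply_symm_apply, dualMap_apply,
    mul'_apply]

variable (σ : Dual k K →ₗ[k] Dual k H)

omit [Module.Finite k H] in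
@[simp]
lemma apply_sigmaR (f : Dual k K) (h : H) : f (sigmaR k K H σ h) = σ f h := by
  simp [sigmaR]

omit [Module.Finite k H] in
lemma eval_sigmaR (h : H) : Dual.eval k K (sigmaR k K H σ h) = applyₗ h ∘ₗ σ := by
  ext; simp

omit [Module.Finite k H] in
lemma sigmaR_one (pair_one_right : ∀ f : Dual k K, σ f 1 = f 1) : sigmaR k K H σ 1 = 1 :=
  eval_apply_injective k <| by ext; simp [pair_one_right]

omit [Module.Finite k H] in
lemma sigmaR_mul (pair_mul_right : ∀ (f : Dual k K) (h h' : H),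
      σ f (h * h') = (mul' k k ∘ₗ map (applyₗ h ∘ₗ σ) (applyₗ h' ∘ₗ σ)) (dcomul k K f))
    (h h' : H) : sigmaR k K H σ (h * h') = sigmaR k K H σ h * sigmaR k K H σ h' :=
  eval_apply_injective k <| by
    ext f
    simp only [Dual.eval_apply, apply_sigmaR, pair_mul_right, ← eval_sigmaR, comp_apply,
      mul'_map_eval_dcomul]

end Pairing

section Components

variable {k K H}

omit [Module.Finite k K] [Module.Finite k H] in
@[simp]
lemma zetaB_tmul (a : K) (b : H) : zetaB k K H (a ⊗ₜ b) = counit (R := k) a • b := by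
  simp [zetaB]

omit [Module.Finite k H] in
@[simp]
lemma piB_tmul (σ : Dual k K →ₗ[k] Dual k H) (a : K) (b : H) :
    piB k K H σ (a ⊗ₜ b) = a * sigmaR k K H σ b := by
  simp [piB]

omit [Module.Finite k K] [Module.Finite k H] in
@[simp]
lemma gammaB_apply (c : K) : gammaB k K H c = c ⊗ₜ 1 := rfl

omit [Module.Finite k K] [Module.Finite k H] in
lemma mulB_tmul_tmul_one (x : K ⊗[k] H) (c : K) :
    mulB k K H (x ⊗ₜ (c ⊗ₜ 1)) = map (mulLeft k c) .id x := by
  induction x using TensorProduct.induction_on with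
  | zero => simp
  | tmul a b => simp [mulB, opMul]
  | add x y hx hy => simp [add_tmul, hx, hy]

omit [Module.Finite k H] in
lemma iotaH_eq_sum (σ : Dual k K →ₗ[k] Dual k H) (Sinv : H →ₗ[k] H) {y : H} {ι : Type*}
    (𝓡 : Repr k y ι) :
    iotaH k K H σ Sinv y = ∑ i ∈ 𝓡.index, sigmaR k K H σ (Sinv (𝓡.right i)) ⊗ₜ 𝓡.left i := by
  simp [iotaH, ← 𝓡.eq]

omit [Module.Finite k H] in
lemma sum_map_mulLeft_sigmaR_iotaH {σ : Dual k K →ₗ[k] Dual k H}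
    (pair_mul_right : ∀ (f : Dual k K) (h h' : H),
      σ f (h * h') = (mul' k k ∘ₗ map (applyₗ h ∘ₗ σ) (applyₗ h' ∘ₗ σ)) (dcomul k K f))
    (pair_one_right : ∀ f : Dual k K, σ f 1 = f 1) {Sinv : H →ₗ[k] H}
    (hSinv₁ : Sinv ∘ₗ HopfAlgebra.antipode k = .id) (hSinv₂ : HopfAlgebra.antipode k ∘ₗ Sinv = .id)
    (h : H) :
    ∑ j ∈ (ℛ k h).index, map (mulLeft k (sigmaR k K H σ ((ℛ k h).right j))) .id
      (iotaH k K H σ Sinv ((ℛ k h).left j)) = 1 ⊗ₜ h := by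
  calc _ = (map (sigmaR k K H σ) .id ∘ₗ (TensorProduct.comm k H H).toLinearMap)
        (∑ j ∈ (ℛ k h).index, ∑ l ∈ (ℛ k ((ℛ k h).left j)).index,
          (ℛ k ((ℛ k h).left j)).left l ⊗ₜ
            ((ℛ k h).right j * Sinv ((ℛ k ((ℛ k h).left j)).right l))) := by
        simp [iotaH_eq_sum _ _ (ℛ k ((ℛ k h).left _)), sigmaR_mul σ pair_mul_right]
    _ = 1 ⊗ₜ h := by
        rw [sum_tmul_mul_antipodeInv hSinv₁ hSinv₂]
        simp [sigmaR_one σ pair_one_right]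

end Components

theorem conv_iota_zeta_gamma_pi_eq_id (σ : Module.Dual k K →ₗ[k] Module.Dual k H)
    (pair_mul_right : ∀ (f : Module.Dual k K) (h h' : H),
      σ f (h * h') =
        (LinearMap.mul' k k ∘ₗ
          TensorProduct.map (LinearMap.applyₗ h ∘ₗ σ) (LinearMap.applyₗ h' ∘ₗ σ))
          (dcomul k K f))
    (pair_one_right : ∀ f : Module.Dual k K, σ f 1 = f 1)
    (Sinv : H →ₗ[k] H)
    (hSinv₁ : Sinv ∘ₗ HopfAlgebra.antipode (R := k) = LinearMap.id)
    (hSinv₂ : HopfAlgebra.antipode (R := k) ∘ₗ Sinv = LinearMap.id) :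
    mulB k K H
        ∘ₗ TensorProduct.map (iotaH k K H σ Sinv ∘ₗ zetaB k K H) (gammaB k K H ∘ₗ piB k K H σ)
        ∘ₗ comulB k K H = LinearMap.id := by
  refine TensorProduct.ext' fun κ h ↦ ?_
  -- `comulB` is by definition the comultiplication of the tensor product coalgebra `K ⊗ H`.
  have hcomul : comulB k K H (κ ⊗ₜ h) = _ := ((ℛ k κ).tmul (ℛ k h)).eq.symm
  calc _ = ∑ i ∈ (ℛ k κ).index, counit (R := k) ((ℛ k κ).left i) •
        map (mulLeft k ((ℛ k κ).right i)) .id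
          (∑ j ∈ (ℛ k h).index, map (mulLeft k (sigmaR k K H σ ((ℛ k h).right j))) .id
            (iotaH k K H σ Sinv ((ℛ k h).left j))) := by
        simp [hcomul, mulB_tmul_tmul_one, Finset.sum_product, Finset.smul_sum, mulLeft_mul,
          map_map]
    _ = κ ⊗ₜ h := by
        simp [sum_map_mulLeft_sigmaR_iotaH pair_mul_right pair_one_right hSinv₁ hSinv₂,
          smul_tmul', ← sum_tmul, sum_counit_smul]
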